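/- arXiv:0901.3506 — 2 statements merged into one kernel-verified Lean document; each statement's English description precedes it below -/
import Mathlib

section
/- Let X and Y be infinite, locally compact, Hausdorff topological spaces and suppose X is perfect, i.e. X is non-empty and has no isolated points. Let T : C₀(X,ℂ) → C₀(Y,ℂ) be a bijective bounded linear map such that for every f ∈ C₀(X,ℂ), both of the linear maps g ↦ S_T(f,g) and g ↦ S_T(g,f) from C₀(X,ℂ) to C₀(Y,ℂ) are weakly compact. Then T is multiplicative, and consequently there is a homeomorphism ψ : Y → X such that T(f) = f ∘ ψ for every f ∈ C₀(X,ℂ). -/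
open Metric ZeroAtInfty Filter Topology
open Function

/-!
Regard `T` as an isomorphism `E` (open mapping theorem) and put
`D f g = E⁻¹ (T f * T g) - f * g = E⁻¹ (S_T(f, g))`, so that every `D f` is weakly compact.
Associativity gives
`D f g * k = D f (g * k) + E⁻¹ (T f * T (D g k)) - D (E⁻¹ (T f * T g)) k`,
so multiplication by `D f g` is a weakly compact operator on `C₀(X, ℂ)`.
On a perfect space such a multiplier `h` vanishes: where `‖h‖ > δ` there are infinitely many
disjoint open sets `V n ∋ p n` carrying bumps `f n`, the partial sums `½ ∑_{k<N} f k` lie in the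
unit ball, and a weak cluster point of `h * ½ ∑_{k<N} f k` would be a continuous function equal to
`h / 2` at every `p n` but to `0` at a cluster point of the `p n`.
Hence `T` is multiplicative, and a multiplicative isomorphism `C₀(X, ℂ) ≃ C₀(Y, ℂ)` is a
composition operator since the nonzero continuous characters of `C₀(X, ℂ)` are point evaluations.
-/

namespace ContinuousLinearMap

section IsWeaklyCompact

open Pointwise

variable {𝕜 E F G : Type*} [NontriviallyNormedField 𝕜]
  [NormedAddCommGroup E] [NormedSpace 𝕜 E] [NormedAddCommGroup F] [NormedSpace 𝕜 F]
  [NormedAddCommGroup G] [NormedSpace 𝕜 G]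

/-- Equivalent to relative weak compactness of the image of the unit ball, the weak topology
being Hausdorff. -/
def IsWeaklyCompact (L : E →L[𝕜] F) : Prop :=
  ∃ K : Set (WeakSpace 𝕜 F), IsCompact K ∧ ∀ e : E, ‖e‖ < 1 → toWeakSpace 𝕜 F (L e) ∈ K

namespace IsWeaklyCompact

theorem comp_left {L : E →L[𝕜] F} (hL : L.IsWeaklyCompact) (M : F →L[𝕜] G) :
    (M ∘L L).IsWeaklyCompact := by
  obtain ⟨K, hK, hLK⟩ := hL
  exact ⟨WeakSpace.map M '' K, hK.image (WeakSpace.map M).continuous,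
    fun e he => ⟨_, hLK e he, rfl⟩⟩

theorem comp_right {L : E →L[𝕜] F} (hL : L.IsWeaklyCompact) (M : G →L[𝕜] E) :
    (L ∘L M).IsWeaklyCompact := by
  obtain ⟨K, hK, hLK⟩ := hL
  obtain ⟨c, hc⟩ := NormedField.exists_lt_norm 𝕜 ‖M‖
  have hc₀ : c ≠ 0 := norm_pos_iff.mp ((norm_nonneg M).trans_lt hc)
  refine ⟨c • K, hK.smul c, fun g hg => ?_⟩
  have hsmall : ‖c⁻¹ • M g‖ < 1 := by
    rw [norm_smul, norm_inv, inv_mul_lt_iff₀ ((norm_nonneg M).trans_lt hc), mul_one]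
    calc ‖M g‖ ≤ ‖M‖ * ‖g‖ := M.le_opNorm g
      _ ≤ ‖M‖ := mul_le_of_le_one_right (norm_nonneg M) hg.le
      _ < ‖c‖ := hc
  convert Set.smul_mem_smul_set (a := c) (hLK _ hsmall) using 1
  simp [smul_smul, mul_inv_cancel₀ hc₀]

theorem add {L₁ L₂ : E →L[𝕜] F} (h₁ : L₁.IsWeaklyCompact) (h₂ : L₂.IsWeaklyCompact) :
    (L₁ + L₂).IsWeaklyCompact := by
  obtain ⟨K₁, hK₁, hL₁⟩ := h₁
  obtain ⟨K₂, hK₂, hL₂⟩ := h₂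
  exact ⟨K₁ + K₂, hK₁.add hK₂, fun e he => Set.add_mem_add (hL₁ e he) (hL₂ e he)⟩

theorem neg {L : E →L[𝕜] F} (hL : L.IsWeaklyCompact) : (-L).IsWeaklyCompact := by
  obtain ⟨K, hK, hLK⟩ := hL
  exact ⟨-K, hK.neg, fun e he => by simpa using hLK e he⟩

theorem sub {L₁ L₂ : E →L[𝕜] F} (h₁ : L₁.IsWeaklyCompact) (h₂ : L₂.IsWeaklyCompact) :
    (L₁ - L₂).IsWeaklyCompact :=
  sub_eq_add_neg L₁ L₂ ▸ h₁.add h₂.neg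

theorem exists_mapClusterPt {L : E →L[𝕜] F} (hL : L.IsWeaklyCompact) {u : ℕ → E}
    (hu : ∀ n, ‖u n‖ < 1) :
    ∃ v : F, ∀ φ : StrongDual 𝕜 F, MapClusterPt (φ v) atTop fun n => φ (L (u n)) := by
  obtain ⟨K, hK, hLK⟩ := hL
  obtain ⟨w, -, hw⟩ := hK.exists_mapClusterPt (f := atTop)
    (u := fun n => toWeakSpace 𝕜 F (L (u n)))
    (le_principal_iff.2 (mem_map.2 (Eventually.of_forall fun n => hLK _ (hu n))))
  exact ⟨w, fun φ => hw.continuousAt_comp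
    (WeakBilin.eval_continuous (topDualPairing 𝕜 F).flip φ).continuousAt⟩

end IsWeaklyCompact

end IsWeaklyCompact

section MulDefect

variable {𝕜 A B : Type*} [NontriviallyNormedField 𝕜]
  [NonUnitalNormedRing A] [NormedSpace 𝕜 A] [IsScalarTower 𝕜 A A] [SMulCommClass 𝕜 A A]
  [NonUnitalNormedRing B] [NormedSpace 𝕜 B] [IsScalarTower 𝕜 B B] [SMulCommClass 𝕜 B B]

/-- The map `S_T(f, ·)`. -/
noncomputable def mulDefect (T : A →L[𝕜] B) (f : A) : A →L[𝕜] B :=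
  mul 𝕜 B (T f) ∘L T - T ∘L mul 𝕜 A f

@[simp]
theorem mulDefect_apply (T : A →L[𝕜] B) (f g : A) :
    T.mulDefect f g = T f * T g - T (f * g) :=
  rfl

theorem mul_symm_mulDefect_eq (E : A ≃L[𝕜] B) (f g : A) :
    mul 𝕜 A (E.symm ((E : A →L[𝕜] B).mulDefect f g)) =
      ((E.symm : B →L[𝕜] A) ∘L (E : A →L[𝕜] B).mulDefect f) ∘L mul 𝕜 A g +
        ((E.symm : B →L[𝕜] A) ∘L mul 𝕜 B (E f) ∘L (E : A →L[𝕜] B)) ∘L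
          ((E.symm : B →L[𝕜] A) ∘L (E : A →L[𝕜] B).mulDefect g) -
        (E.symm : B →L[𝕜] A) ∘L (E : A →L[𝕜] B).mulDefect (E.symm (E f * E g)) := by
  ext k
  simp only [mul_apply', add_apply, sub_apply, comp_apply, mulDefect_apply,
    ContinuousLinearEquiv.coe_coe, map_sub, E.apply_symm_apply, E.symm_apply_apply, mul_assoc]
  abel

theorem isWeaklyCompact_mul_symm_mulDefect (E : A ≃L[𝕜] B)
    (hE : ∀ f, ((E : A →L[𝕜] B).mulDefect f).IsWeaklyCompact) (f g : A) :
    (mul 𝕜 A (E.symm ((E : A →L[𝕜] B).mulDefect f g))).IsWeaklyCompact := by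
  rw [mul_symm_mulDefect_eq]
  exact ((((hE f).comp_left _).comp_right _).add (((hE g).comp_left _).comp_left _)).sub
    ((hE _).comp_left _)

end MulDefect

end ContinuousLinearMap

theorem IsOpen.exists_seq_pairwise_disjoint_subset {X : Type*} [TopologicalSpace X] [T2Space X]
    [PerfectSpace X] {U : Set X} (hU : IsOpen U) (hne : U.Nonempty) :
    ∃ V : ℕ → Set X, (∀ n, (V n).Nonempty) ∧ (∀ n, IsOpen (V n)) ∧ (∀ n, V n ⊆ U) ∧
      Pairwise (Disjoint on V) := by
  obtain ⟨x, hx⟩ := hne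
  have : Infinite U := (infinite_of_mem_nhds x (hU.mem_nhds hx)).to_subtype
  obtain ⟨W, hW, hWo, hWd⟩ := exists_seq_infinite_isOpen_pairwise_disjoint U
  exact ⟨fun n => (↑) '' W n, fun n => (hW n).nonempty.image _,
    fun n => hU.isOpenEmbedding_subtypeVal.isOpenMap _ (hWo n),
    fun n => Subtype.coe_image_subset _ _,
    fun m n hmn => (Set.disjoint_image_iff Subtype.val_injective).2 (hWd hmn)⟩

theorem IsCompact.exists_mapClusterPt_forall_notMem {X : Type*} [TopologicalSpace X] {K : Set X}
    (hK : IsCompact K) {p : ℕ → X} (hpK : ∀ n, p n ∈ K) {V : ℕ → Set X}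
    (hVo : ∀ n, IsOpen (V n)) (hVd : Pairwise (Disjoint on V)) (hpV : ∀ n, p n ∈ V n) :
    ∃ x, MapClusterPt x atTop p ∧ ∀ n, x ∉ V n := by
  obtain ⟨x, -, hx⟩ := hK.exists_mapClusterPt (f := atTop)
    (le_principal_iff.2 (mem_map.2 (Eventually.of_forall hpK)))
  refine ⟨x, hx, fun k hxk => ?_⟩
  obtain ⟨n, hnk, hn⟩ := ((hx.frequently ((hVo k).mem_nhds hxk)).and_eventually
    (eventually_ne_atTop k)).exists
  exact Set.disjoint_left.1 (hVd hn) (hpV n) hnk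

namespace ZeroAtInftyContinuousMap

variable {X : Type*} [TopologicalSpace X]

section Normed

variable {β : Type*} [NormedAddCommGroup β]

theorem norm_apply_le (f : C₀(X, β)) (x : X) : ‖f x‖ ≤ ‖f‖ :=
  norm_toBCF_eq_norm (f := f) ▸ f.toBCF.norm_coe_le_norm x

theorem norm_le {f : C₀(X, β)} {C : ℝ} (hC : 0 ≤ C) : ‖f‖ ≤ C ↔ ∀ x, ‖f x‖ ≤ C :=
  norm_toBCF_eq_norm (f := f) ▸ BoundedContinuousFunction.norm_le hC

theorem isCompact_setOf_le_norm (f : C₀(X, β)) {ε : ℝ} (hε : 0 < ε) :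
    IsCompact {x | ε ≤ ‖f x‖} := by
  obtain ⟨K, hK, hKf⟩ := mem_cocompact.mp (zero_at_infty f (ball_mem_nhds 0 hε))
  refine hK.of_isClosed_subset (isClosed_le continuous_const (map_continuous f).norm) ?_
  intro x hx
  by_contra hxK
  exact lt_irrefl ε (hx.trans_lt (by simpa using hKf hxK))

variable (𝕜 : Type*) [NormedField 𝕜] [NormedSpace 𝕜 β]

noncomputable def evalCLM (x : X) : C₀(X, β) →L[𝕜] β :=
  LinearMap.mkContinuous ⟨⟨fun f => f x, fun _ _ => rfl⟩, fun _ _ => rfl⟩ 1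
    fun f => by simpa using norm_apply_le f x

@[simp]
theorem evalCLM_apply (x : X) (f : C₀(X, β)) : evalCLM 𝕜 x f = f x :=
  rfl

end Normed

theorem exists_apply_eq_mul (f : C₀(X, ℂ)) {w : X → ℂ} (hw : Continuous w) {C : ℝ}
    (hwC : ∀ x, ‖w x‖ ≤ C) : ∃ s : C₀(X, ℂ), ∀ x, s x = f x * w x :=
  ⟨⟨⟨fun x => f x * w x, (map_continuous f).mul hw⟩,
    (zero_at_infty f).zero_mul_isBoundedUnder_le ⟨C, eventually_map.2 (Eventually.of_forall hwC)⟩⟩,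
    fun _ => rfl⟩

section ComplexOrder

open scoped ComplexOrder

theorem exists_norm_sub_mul_le (f u : C₀(X, ℂ)) (hu : ∀ y, 0 ≤ u y) {ε δ : ℝ} (hε : 0 < ε)
    (hδ : 0 < δ) (hfu : ∀ y, ε ≤ ‖f y‖ → (δ : ℂ) ≤ u y) :
    ∃ s : C₀(X, ℂ), ‖f - u * s‖ ≤ ε := by
  set t := δ * ε / (‖f‖ + 1) with ht
  have ht₀ : 0 < t := by positivity
  set ρ : X → ℝ := fun y => (u y).re
  have hρu : ∀ y, u y = ρ y := fun y =>
    Complex.eq_re_of_ofReal_le (r := 0) (by exact_mod_cast hu y)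
  have hρ₀ : ∀ y, 0 ≤ ρ y := fun y => by simpa [hρu y] using hu y
  have hρt : ∀ y, ((ρ y + t : ℝ) : ℂ) ≠ 0 := fun y => by
    exact_mod_cast (add_pos_of_nonneg_of_pos (hρ₀ y) ht₀).ne'
  obtain ⟨s, hs⟩ := f.exists_apply_eq_mul (w := fun y => ((ρ y + t : ℝ) : ℂ)⁻¹)
    (by fun_prop (disch := exact hρt)) (C := t⁻¹) fun y => by
      rw [norm_inv, Complex.norm_real, Real.norm_of_nonneg (by linarith [hρ₀ y])]
      exact inv_anti₀ ht₀ (by linarith [hρ₀ y])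
  refine ⟨s, (norm_le hε.le).2 fun y => ?_⟩
  have hpos : 0 < ρ y + t := by linarith [hρ₀ y]
  have hval : (f - u * s) y = f y * ((t / (ρ y + t) : ℝ) : ℂ) := by
    have hne : (ρ y : ℂ) + t ≠ 0 := by exact_mod_cast hpos.ne'
    rw [sub_apply, mul_apply, hs, hρu]
    push_cast
    field_simp
    ring
  have hfrac : t / (ρ y + t) ≤ 1 := (div_le_one hpos).2 (by linarith [hρ₀ y])
  rw [hval, norm_mul, Complex.norm_real, Real.norm_of_nonneg (div_nonneg ht₀.le hpos.le)]
  by_cases hy : ε ≤ ‖f y‖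
  · have hδρ : δ ≤ ρ y := by exact_mod_cast hρu y ▸ hfu y hy
    calc ‖f y‖ * (t / (ρ y + t)) ≤ ‖f‖ * (t / δ) :=
          mul_le_mul (norm_apply_le f y) (div_le_div_of_nonneg_left ht₀.le hδ (by linarith))
            (div_nonneg ht₀.le hpos.le) (norm_nonneg f)
      _ = ε * (‖f‖ / (‖f‖ + 1)) := by rw [ht]; field_simp
      _ ≤ ε := mul_le_of_le_one_right hε.le ((div_le_one (by positivity)).2 (by linarith))
  · calc ‖f y‖ * (t / (ρ y + t)) ≤ ‖f y‖ := mul_le_of_le_one_right (norm_nonneg _) hfrac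
      _ ≤ ε := (not_le.1 hy).le

theorem exists_nonneg_mem_ker_ge_on_isCompact (χ : C₀(X, ℂ) →ₗ[ℂ] ℂ)
    (hχ : ∀ f g, χ (f * g) = χ f * χ g) (hker : ∀ x, ∃ k, χ k = 0 ∧ k x ≠ 0) {K : Set X}
    (hK : IsCompact K) :
    ∃ u : C₀(X, ℂ), χ u = 0 ∧ (∀ y, 0 ≤ u y) ∧ ∃ δ : ℝ, 0 < δ ∧ ∀ y ∈ K, (δ : ℂ) ≤ u y := by
  refine hK.induction_on (p := fun S => ∃ u : C₀(X, ℂ), χ u = 0 ∧ (∀ y, 0 ≤ u y) ∧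
    ∃ δ : ℝ, 0 < δ ∧ ∀ y ∈ S, (δ : ℂ) ≤ u y) ?_ (fun S S' hSS' hS' => ?_)
    (fun S S' hS hS' => ?_) fun x _ => ?_
  · exact ⟨0, map_zero χ, fun _ => le_rfl, 1, one_pos, by simp⟩
  · obtain ⟨u, hu, hu₀, δ, hδ, huS'⟩ := hS'
    exact ⟨u, hu, hu₀, δ, hδ, fun y hy => huS' y (hSS' hy)⟩
  · obtain ⟨u, hu, hu₀, δ, hδ, huS⟩ := hS
    obtain ⟨v, hv, hv₀, δ', hδ', hvS'⟩ := hS'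
    refine ⟨u + v, by simp [hu, hv], fun y => add_nonneg (hu₀ y) (hv₀ y), min δ δ',
      lt_min hδ hδ', fun y hy => ?_⟩
    rw [add_apply]
    rcases hy with hy | hy
    · exact (Complex.real_le_real.2 (min_le_left δ δ')).trans
        ((huS y hy).trans (le_add_of_nonneg_right (hv₀ y)))
    · exact (Complex.real_le_real.2 (min_le_right δ δ')).trans
        ((hvS' y hy).trans (le_add_of_nonneg_left (hu₀ y)))
  · obtain ⟨k, hk, hkx⟩ := hker x
    have hsq : ∀ y, (star k * k) y = ((‖k y‖ ^ 2 : ℝ) : ℂ) := fun y => by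
      simp [Complex.conj_mul']
    refine ⟨{y | ‖k x‖ ^ 2 / 2 < ‖k y‖ ^ 2}, mem_nhdsWithin_of_mem_nhds
      ((isOpen_lt continuous_const (by fun_prop)).mem_nhds ?_), star k * k,
      by simp [hχ, hk], fun y => ?_, ‖k x‖ ^ 2 / 2, by positivity, fun y hy => ?_⟩
    · show ‖k x‖ ^ 2 / 2 < ‖k x‖ ^ 2
      linarith [pow_pos (norm_pos_iff.2 hkx) 2]
    · rw [hsq]
      exact_mod_cast sq_nonneg ‖k y‖
    · rw [hsq]
      exact_mod_cast hy.le

end ComplexOrder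

section LocallyCompact

variable [LocallyCompactSpace X] [T2Space X]

theorem exists_bump {x : X} {V : Set X} (hV : IsOpen V) (hx : x ∈ V) :
    ∃ f : C₀(X, ℂ), f x = 1 ∧ (∀ y ∉ V, f y = 0) ∧ ∀ y, ‖f y‖ ≤ 1 := by
  obtain ⟨f, hf1, hf0, hfc, hf01⟩ := exists_continuous_one_zero_of_isCompact isCompact_singleton
    hV.isClosed_compl (Set.disjoint_compl_right_iff_subset.2 (Set.singleton_subset_iff.2 hx))
  have hf : Tendsto (fun y => (f y : ℂ)) (cocompact X) (𝓝 0) :=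
    (Complex.continuous_ofReal.tendsto' 0 0 Complex.ofReal_zero).comp hfc.is_zero_at_infty
  refine ⟨⟨⟨fun y => (f y : ℂ), by fun_prop⟩, hf⟩, ?_, fun y hy => ?_, fun y => ?_⟩ <;>
    simp only [coe_mk, Complex.norm_real]
  · simpa using hf1 rfl
  · simpa using hf0 hy
  · simpa [abs_le] using ⟨(neg_nonpos.2 zero_le_one).trans (hf01 y).1, (hf01 y).2⟩

theorem exists_apply_ne_zero (x : X) : ∃ f : C₀(X, ℂ), f x ≠ 0 :=
  let ⟨f, hf, _⟩ := exists_bump isOpen_univ (Set.mem_univ x)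
  ⟨f, by simp [hf]⟩

theorem eq_of_forall_apply_eq {a b : X} (h : ∀ f : C₀(X, ℂ), f a = f b) : a = b := by
  by_contra hab
  obtain ⟨f, hfa, hfb, -⟩ := exists_bump isClosed_singleton.isOpen_compl hab
  simpa [hfa] using (h f).trans (hfb b (by simp))

theorem continuous_of_forall_continuous_comp {Y : Type*} [TopologicalSpace Y] {ψ : Y → X}
    (h : ∀ f : C₀(X, ℂ), Continuous fun y => f (ψ y)) : Continuous ψ := by
  refine continuous_iff_continuousAt.2 fun y s hs => ?_
  obtain ⟨U, hUs, hU, hyU⟩ := mem_nhds_iff.mp hs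
  obtain ⟨f, hf1, hf0, -⟩ := exists_bump hU hyU
  have hV : IsOpen {y' | f (ψ y') ≠ 0} := isOpen_ne_fun (h f) continuous_const
  exact mem_map.2 <| mem_of_superset (hV.mem_nhds (by simp [hf1]))
    fun y' hy' => hUs (not_not.1 fun hy'U => hy' (hf0 _ hy'U))

theorem eq_apply_of_ker_le (χ : C₀(X, ℂ) →ₗ[ℂ] ℂ) (hχ : ∀ f g, χ (f * g) = χ f * χ g)
    {f₀ : C₀(X, ℂ)} (hf₀ : χ f₀ = 1) {x : X} (hx : ∀ k, χ k = 0 → k x = 0) (f : C₀(X, ℂ)) :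
    χ f = f x := by
  have hev : ∀ f : C₀(X, ℂ), f x = χ f * f₀ x := fun f => by
    simpa [sub_eq_zero] using hx (f - χ f • f₀) (by simp [hf₀])
  have hf₀x : f₀ x ≠ 0 := fun h => by
    obtain ⟨g, hg⟩ := exists_apply_ne_zero x
    exact hg (by simp [hev g, h])
  have hf₀x1 : f₀ x = 1 :=
    mul_left_cancel₀ hf₀x (by simpa [hχ, hf₀] using hev (f₀ * f₀))
  simp [hev f, hf₀x1]

theorem exists_eq_apply (χ : C₀(X, ℂ) →L[ℂ] ℂ) (hχ : ∀ f g, χ (f * g) = χ f * χ g)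
    (hχ₀ : χ ≠ 0) : ∃ x : X, ∀ f, χ f = f x := by
  obtain ⟨f₁, hf₁⟩ : ∃ f, χ f ≠ 0 := by
    by_contra! h
    exact hχ₀ (ContinuousLinearMap.ext h)
  set f₀ := (χ f₁)⁻¹ • f₁
  have hf₀ : χ f₀ = 1 := by simp [f₀, hf₁]
  suffices ∃ x, ∀ k, χ k = 0 → k x = 0 from
    this.imp fun x hx => eq_apply_of_ker_le (χ : C₀(X, ℂ) →ₗ[ℂ] ℂ) hχ hf₀ hx
  -- Otherwise `f₀` is within `ε` of `ker χ`, contradicting `χ f₀ = 1` for `ε < 1 / ‖χ‖`.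
  by_contra! hker
  set ε := (‖χ‖ + 1)⁻¹
  have hε : 0 < ε := by positivity
  obtain ⟨u, hu, hu₀, δ, hδ, huK⟩ := exists_nonneg_mem_ker_ge_on_isCompact
    (χ : C₀(X, ℂ) →ₗ[ℂ] ℂ) hχ hker (isCompact_setOf_le_norm f₀ hε)
  obtain ⟨s, hs⟩ := exists_norm_sub_mul_le f₀ u hu₀ hε hδ huK
  have h1 : χ (f₀ - u * s) = 1 := by simp [hχ, show χ u = 0 from hu, hf₀]
  have : (1 : ℝ) < 1 := calc
    1 = ‖χ (f₀ - u * s)‖ := by simp [h1]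
    _ ≤ ‖χ‖ * ε := χ.le_opNorm_of_le hs
    _ < 1 := by rw [mul_inv_lt_iff₀ (by positivity)]; linarith
  exact lt_irrefl _ this

theorem exists_seq_sum_bumps {V : ℕ → Set X} (hVo : ∀ n, IsOpen (V n))
    (hVd : Pairwise (Disjoint on V)) {p : ℕ → X} (hpV : ∀ n, p n ∈ V n) :
    ∃ g : ℕ → C₀(X, ℂ), (∀ N, ‖g N‖ < 1) ∧ (∀ n, ∀ᶠ N in atTop, g N (p n) = 2⁻¹) ∧
      ∀ y, (∀ n, y ∉ V n) → ∀ N, g N y = 0 := by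
  choose f hf1 hf0 hf using fun n => exists_bump (hVo n) (hpV n)
  have happly : ∀ N y, (∑ k ∈ Finset.range N, (2⁻¹ : ℂ) • f k) y =
      ∑ k ∈ Finset.range N, 2⁻¹ * f k y := fun N y =>
    map_sum (evalCLM ℂ y) (fun k => (2⁻¹ : ℂ) • f k) _
  have hsum : ∀ N j y, y ∈ V j → (∑ k ∈ Finset.range N, (2⁻¹ : ℂ) • f k) y =
      if j ∈ Finset.range N then 2⁻¹ * f j y else 0 := fun N j y hy => by
    rw [happly, ← Finset.sum_ite_eq' (Finset.range N) j fun k => 2⁻¹ * f k y]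
    refine Finset.sum_congr rfl fun k _ => ?_
    split_ifs with hkj
    · rw [hkj]
    · rw [hf0 k y fun hyk => Set.disjoint_left.1 (hVd hkj) hyk hy, mul_zero]
  refine ⟨fun N => ∑ k ∈ Finset.range N, (2⁻¹ : ℂ) • f k, fun N => ?_,
    fun n => (eventually_gt_atTop n).mono fun N hN => by simp [hsum N n _ (hpV n), hN, hf1],
    fun y hy N => by simp [happly, hf0 _ y (hy _)]⟩
  refine ((norm_le (by norm_num)).2 fun y => ?_).trans_lt (by norm_num : (2⁻¹ : ℝ) < 1)
  by_cases hy : ∃ j, y ∈ V j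
  · obtain ⟨j, hj⟩ := hy
    rw [hsum N j y hj]
    split_ifs
    · simpa using hf j y
    · simp
  · simp only [not_exists] at hy
    simp [happly, hf0 _ y (hy _)]

theorem eq_zero_of_isWeaklyCompact_mul [PerfectSpace X] (h : C₀(X, ℂ))
    (hh : (ContinuousLinearMap.mul ℂ C₀(X, ℂ) h).IsWeaklyCompact) : h = 0 := by
  by_contra hne
  obtain ⟨x₀, hx₀⟩ : ∃ x, h x ≠ 0 := by simpa [DFunLike.ext_iff] using hne
  set δ := ‖h x₀‖ / 2
  have hδ : 0 < δ := by positivity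
  obtain ⟨V, hVne, hVo, hVU, hVd⟩ := IsOpen.exists_seq_pairwise_disjoint_subset
    (isOpen_lt continuous_const (map_continuous h).norm) (⟨x₀, by simp [δ, hx₀]⟩ :
      {x | δ < ‖h x‖}.Nonempty)
  choose p hpV using hVne
  obtain ⟨g, hg1, hgp, hg0⟩ := exists_seq_sum_bumps hVo hVd hpV
  obtain ⟨G, hG⟩ := hh.exists_mapClusterPt hg1
  have hGy : ∀ y, MapClusterPt (G y) atTop fun N => h y * g N y := fun y => by
    simpa using hG (evalCLM ℂ y)
  obtain ⟨x, hpx, hxV⟩ := (isCompact_setOf_le_norm h hδ).exists_mapClusterPt_forall_notMem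
    (fun n => (show δ < ‖h (p n)‖ from hVU n (hpV n)).le) hVo hVd hpV
  have hGx : G x = 0 := isClosed_singleton.mem_of_mapClusterPt (hGy x)
    (Eventually.of_forall fun N => by simp [hg0 x hxV N])
  have hGp : ∀ n, δ / 2 ≤ ‖G (p n)‖ := fun n => by
    have : G (p n) = h (p n) * 2⁻¹ := isClosed_singleton.mem_of_mapClusterPt (hGy (p n))
      ((hgp n).mono fun N hN => by simp [hN])
    have hpn : δ < ‖h (p n)‖ := hVU n (hpV n)
    rw [this, norm_mul, norm_inv, Complex.norm_ofNat]
    linarith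
  have := (isClosed_le continuous_const continuous_norm).mem_of_mapClusterPt
    (hpx.continuousAt_comp (map_continuous G).continuousAt) (Eventually.of_forall hGp)
  simp [hGx] at this
  linarith

variable {Y : Type*} [TopologicalSpace Y]

theorem exists_continuousMap_eq_comp (Φ : C₀(X, ℂ) →L[ℂ] C₀(Y, ℂ))
    (hΦ : ∀ f g, Φ (f * g) = Φ f * Φ g) (hΦ₀ : ∀ y, ∃ f, Φ f y ≠ 0) :
    ∃ ψ : C(Y, X), ∀ f y, Φ f y = f (ψ y) := by
  have : ∀ y, ∃ x, ∀ f, Φ f y = f x := fun y => by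
    refine (exists_eq_apply (evalCLM ℂ y ∘L Φ) (fun f g => by simp [hΦ]) fun h => ?_).imp
      fun x hx f => by simpa using hx f
    obtain ⟨f, hf⟩ := hΦ₀ y
    exact hf (by simpa using DFunLike.congr_fun h f)
  choose ψ hψ using this
  exact ⟨⟨ψ, continuous_of_forall_continuous_comp fun f => by
    simpa only [← hψ] using map_continuous (Φ f)⟩, fun f y => hψ y f⟩

theorem exists_homeomorph_eq_comp [LocallyCompactSpace Y] [T2Space Y]
    (Φ : C₀(X, ℂ) ≃L[ℂ] C₀(Y, ℂ)) (hΦ : ∀ f g, Φ (f * g) = Φ f * Φ g) :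
    ∃ ψ : Y ≃ₜ X, ∀ f y, Φ f y = f (ψ y) := by
  have hΦsymm : ∀ u v, Φ.symm (u * v) = Φ.symm u * Φ.symm v := fun u v =>
    Φ.injective (by simp [hΦ])
  obtain ⟨ψ, hψ⟩ := exists_continuousMap_eq_comp (Φ : C₀(X, ℂ) →L[ℂ] C₀(Y, ℂ)) hΦ fun y =>
    let ⟨u, hu⟩ := exists_apply_ne_zero y
    ⟨Φ.symm u, by simpa using hu⟩
  obtain ⟨φ, hφ⟩ := exists_continuousMap_eq_comp (Φ.symm : C₀(Y, ℂ) →L[ℂ] C₀(X, ℂ)) hΦsymm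
    fun x =>
      let ⟨f, hf⟩ := exists_apply_ne_zero x
      ⟨Φ f, by simpa using hf⟩
  simp only [ContinuousLinearEquiv.coe_coe] at hψ hφ
  refine ⟨{ toFun := ψ, invFun := φ, left_inv := fun y => ?_, right_inv := fun x => ?_ }, hψ⟩
  · exact eq_of_forall_apply_eq fun u => by rw [← hφ, ← hψ, Φ.apply_symm_apply]
  · exact eq_of_forall_apply_eq fun f => by rw [← hψ, ← hφ, Φ.symm_apply_apply]

end LocallyCompact

end ZeroAtInftyContinuousMap

theorem perfect_semiWcf_isomorphism_is_multiplicative_general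
    {X Y : Type*} [TopologicalSpace X] [LocallyCompactSpace X] [T2Space X]
    [TopologicalSpace Y] [LocallyCompactSpace Y] [T2Space Y]
    (hX : ∀ x : X, (𝓝[≠] x).NeBot)
    (T : C₀(X, ℂ) →L[ℂ] C₀(Y, ℂ)) (hbij : Function.Bijective T)
    (hwc : ∀ f : C₀(X, ℂ),
      IsCompact (closure ((toWeakSpace ℂ C₀(Y, ℂ)) ''
        ((fun g => T f * T g - T (f * g)) '' ball (0 : C₀(X, ℂ)) 1))) ∧
      IsCompact (closure ((toWeakSpace ℂ C₀(Y, ℂ)) ''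
        ((fun g => T g * T f - T (g * f)) '' ball (0 : C₀(X, ℂ)) 1)))) :
    (∀ f g : C₀(X, ℂ), T (f * g) = T f * T g) ∧
    ∃ ψ : Y ≃ₜ X, ∀ (f : C₀(X, ℂ)) (y : Y), T f y = f (ψ y) := by
  have : PerfectSpace X := perfectSpace_iff_forall_not_isolated.2 hX
  set E := ContinuousLinearEquiv.ofBijective T (LinearMap.ker_eq_bot.2 hbij.1)
    (LinearMap.range_eq_top.2 hbij.2)
  have hE : (E : C₀(X, ℂ) →L[ℂ] C₀(Y, ℂ)) = T := ContinuousLinearEquiv.coe_ofBijective _ _ _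
  have hdefect : ∀ f, ((E : C₀(X, ℂ) →L[ℂ] C₀(Y, ℂ)).mulDefect f).IsWeaklyCompact := fun f =>
    hE ▸ ⟨_, (hwc f).1, fun g hg => subset_closure ⟨_, ⟨g, mem_ball_zero_iff.2 hg, rfl⟩, rfl⟩⟩
  have hmul : ∀ f g, T (f * g) = T f * T g := fun f g => by
    have := ZeroAtInftyContinuousMap.eq_zero_of_isWeaklyCompact_mul _
      (ContinuousLinearMap.isWeaklyCompact_mul_symm_mulDefect E hdefect f g)
    rwa [E.symm.map_eq_zero_iff, hE, ContinuousLinearMap.mulDefect_apply, sub_eq_zero,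
      eq_comm] at this
  exact ⟨hmul, ZeroAtInftyContinuousMap.exists_homeomorph_eq_comp E hmul⟩

/-- if `X` and `Y` are infinite locally compact Hausdorff spaces, `X` is perfect
(no isolated points), and `T : C₀(X,ℂ) → C₀(Y,ℂ)` is a bijective bounded linear map such that
for every `f` the linear maps `g ↦ S_T(f,g)` and `g ↦ S_T(g,f)` are weakly compact (where
`S_T(f,g) = T f * T g - T (f*g)`), then `T` is multiplicative, and hence is induced by a
homeomorphism `ψ : Y ≃ₜ X` via `T f = f ∘ ψ`. -/
theorem perfect_semiWcf_isomorphism_is_multiplicative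
    {X Y : Type*} [TopologicalSpace X] [LocallyCompactSpace X] [T2Space X] [Infinite X]
    [TopologicalSpace Y] [LocallyCompactSpace Y] [T2Space Y] [Infinite Y]
    (hX : ∀ x : X, (𝓝[≠] x).NeBot)
    (T : C₀(X, ℂ) →L[ℂ] C₀(Y, ℂ)) (hbij : Function.Bijective T)
    (hwc : ∀ f : C₀(X, ℂ),
      IsCompact (closure ((toWeakSpace ℂ C₀(Y, ℂ)) ''
        ((fun g => T f * T g - T (f * g)) '' ball (0 : C₀(X, ℂ)) 1))) ∧
      IsCompact (closure ((toWeakSpace ℂ C₀(Y, ℂ)) ''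
        ((fun g => T g * T f - T (g * f)) '' ball (0 : C₀(X, ℂ)) 1)))) :
    (∀ f g : C₀(X, ℂ), T (f * g) = T f * T g) ∧
    ∃ ψ : Y ≃ₜ X, ∀ (f : C₀(X, ℂ)) (y : Y), T f y = f (ψ y) :=
  perfect_semiWcf_isomorphism_is_multiplicative_general hX T hbij hwc
end

section
/- Let A = ℓ∞(ℕ,ℂ) with pointwise multiplication and the supremum norm, and let B be the Banach algebra whose underlying space is M₂(ℂ) × ℓ∞(ℕ,ℂ) with product (M,a)(N,b) = (MN, ab) and norm ‖(M,a)‖ = max(‖M‖,‖a‖), where M₂(ℂ) is the algebra of 2×2 complex matrices with the operator norm. Define T : A → B by T((aₙ)ₙ) = ( [[a₀,a₁],[a₂,a₃]], (a₄,a₅,a₆,…) ), i.e. the first component is the 2×2 matrix formed from the first four terms of a and the second component is the sequence n ↦ a_{n+4}. Then T is a bounded linear bijection whose failure of multiplicativity S_T has finite-dimensional range (hence S_T is a compact bilinear map and T is a bounded cf-homomorphism with bounded cf-homomorphism inverse), yet A is commutative and B is not commutative, so A and B are not isomorphic as algebras. -/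
/-!
Splitting off the first four coordinates identifies `ℓ∞` isometrically with `ℂ⁴ × ℓ∞`, and `ℂ⁴`
with `M₂(ℂ)`; this is `T`. Its second component, the shift `a ↦ (a (n + 4))ₙ`, is multiplicative,
so `S_T` takes values in `M₂(ℂ) × 0` and `S_{T⁻¹}` in `T⁻¹(M₂(ℂ) × 0)`. Both are
finite-dimensional, and a bounded bilinear map with values in a finite-dimensional subspace is
compact. Finally, an algebra isomorphism would carry the commutativity of `ℓ∞` over to `B`,
whose first factor `M₂(ℂ)` is not commutative.
-/

open Metric
open scoped ENNReal

-- `M₂(ℂ)` is realised as the operators on `EuclideanSpace ℂ (Fin 2)`, so it has the operator norm.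
noncomputable abbrev StmtB : Type :=
  ((EuclideanSpace ℂ (Fin 2)) →L[ℂ] (EuclideanSpace ℂ (Fin 2))) × lp (fun _ : ℕ => ℂ) ∞

namespace lp

variable {𝕜 E : Type*} [NormedRing 𝕜] [NormedAddCommGroup E] [Module 𝕜 E] [IsBoundedSMul 𝕜 E]

theorem memℓp_infty_comp_add (a : lp (fun _ : ℕ => E) ∞) (k : ℕ) :
    Memℓp (fun n => a (n + k)) ∞ :=
  memℓp_infty ⟨‖a‖, by rintro _ ⟨n, rfl⟩; exact norm_apply_le_norm ENNReal.top_ne_zero a _⟩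

theorem norm_dite_le_max {k : ℕ} (v : Fin k → E) (b : lp (fun _ : ℕ => E) ∞) (n : ℕ) :
    ‖if h : n < k then v ⟨n, h⟩ else b (n - k)‖ ≤ max ‖v‖ ‖b‖ := by
  split_ifs
  · exact le_max_of_le_left (norm_le_pi_norm v _)
  · exact le_max_of_le_right (norm_apply_le_norm ENNReal.top_ne_zero b _)

variable (𝕜 E) in
noncomputable def inftySplitAt (k : ℕ) :
    lp (fun _ : ℕ => E) ∞ ≃ₗᵢ[𝕜] (Fin k → E) × lp (fun _ : ℕ => E) ∞ :=
  .ofBounds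
    { toFun a := (fun i => a i, ⟨fun n => a (n + k), memℓp_infty_comp_add a k⟩)
      invFun x := ⟨fun n => if h : n < k then x.1 ⟨n, h⟩ else x.2 (n - k),
        memℓp_infty ⟨_, Set.forall_mem_range.2 (norm_dite_le_max x.1 x.2)⟩⟩
      map_add' _ _ := rfl
      map_smul' _ _ := rfl
      left_inv a := by
        ext n
        by_cases h : n < k
        · simp [h]
        · simp [h, Nat.sub_add_cancel (not_lt.1 h)]
      right_inv x := by ext <;> simp }
    (fun a => max_le ((pi_norm_le_iff_of_nonneg (norm_nonneg a)).2 fun i =>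
        norm_apply_le_norm ENNReal.top_ne_zero a _)
      (norm_le_of_forall_le (norm_nonneg a) fun n => norm_apply_le_norm ENNReal.top_ne_zero a _))
    (fun x => norm_le_of_forall_le (norm_nonneg x) (norm_dite_le_max x.1 x.2))

@[simp]
theorem inftySplitAt_apply_fst (k : ℕ) (a : lp (fun _ : ℕ => E) ∞) (i : Fin k) :
    (inftySplitAt 𝕜 E k a).1 i = a i := rfl

@[simp]
theorem inftySplitAt_apply_snd (k : ℕ) (a : lp (fun _ : ℕ => E) ∞) (n : ℕ) :
    (inftySplitAt 𝕜 E k a).2 n = a (n + k) := rfl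

theorem inftySplitAt_snd_mul {R : Type*} [NormedRing R] [Module 𝕜 R] [IsBoundedSMul 𝕜 R] (k : ℕ)
    (a b : lp (fun _ : ℕ => R) ∞) :
    (inftySplitAt 𝕜 R k (a * b)).2 = (inftySplitAt 𝕜 R k a).2 * (inftySplitAt 𝕜 R k b).2 := by
  ext n; simp [infty_coeFn_mul]

end lp

section MulDefect

variable {𝕜 A B : Type*}

def mulDefect [Mul A] [Mul B] [Sub B] (T : A → B) (a b : A) : B := T a * T b - T (a * b)

variable [NontriviallyNormedField 𝕜] [NonUnitalNormedRing A] [NonUnitalNormedRing B]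
  [NormedSpace 𝕜 A] [NormedSpace 𝕜 B]

theorem norm_mulDefect_le (T : A →L[𝕜] B) (a b : A) :
    ‖mulDefect T a b‖ ≤ (‖T‖ * ‖T‖ + ‖T‖) * (‖a‖ * ‖b‖) :=
  calc ‖T a * T b - T (a * b)‖ ≤ ‖T a‖ * ‖T b‖ + ‖T (a * b)‖ :=
        (norm_sub_le _ _).trans (by gcongr; exact norm_mul_le _ _)
    _ ≤ (‖T‖ * ‖a‖) * (‖T‖ * ‖b‖) + ‖T‖ * (‖a‖ * ‖b‖) := by
        gcongr
        · exact T.le_opNorm a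
        · exact T.le_opNorm b
        · exact (T.le_opNorm _).trans (by gcongr; exact norm_mul_le a b)
    _ = (‖T‖ * ‖T‖ + ‖T‖) * (‖a‖ * ‖b‖) := by ring

theorem Bornology.IsBounded.isCompact_closure_of_subset_submodule [ProperSpace 𝕜]
    {F : Type*} [NormedAddCommGroup F] [NormedSpace 𝕜 F] {V : Submodule 𝕜 F}
    [FiniteDimensional 𝕜 V] {s : Set F} (hs : Bornology.IsBounded s) (hsV : s ⊆ V) :
    IsCompact (closure s) := by
  have := FiniteDimensional.proper 𝕜 V
  obtain ⟨R, hR⟩ := hs.subset_closedBall 0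
  refine ((isCompact_closedBall (0 : V) R).image continuous_subtype_val).closure_of_subset
    fun x hx => ?_
  exact ⟨⟨x, hsV hx⟩, by simpa using hR hx, rfl⟩

theorem isCompact_closure_image2_mulDefect [ProperSpace 𝕜] (T : A →L[𝕜] B) (V : Submodule 𝕜 B)
    [FiniteDimensional 𝕜 V] (hV : ∀ a b, mulDefect T a b ∈ V) :
    IsCompact (closure (Set.image2 (mulDefect T) (ball 0 1) (ball 0 1))) := by
  refine Bornology.IsBounded.isCompact_closure_of_subset_submodule ?_
    (Set.image2_subset_iff.2 fun a _ b _ => hV a b)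
  refine isBounded_iff_forall_norm_le.2 ⟨‖T‖ * ‖T‖ + ‖T‖, ?_⟩
  rintro _ ⟨a, ha, b, hb, rfl⟩
  rw [mem_ball_zero_iff] at ha hb
  exact (norm_mulDefect_le T a b).trans
    (mul_le_of_le_one_right (by positivity) (mul_le_one₀ ha.le (norm_nonneg b) hb.le))

end MulDefect

section ProdSnd

variable {R A M C : Type*} [Semiring R] [NonUnitalNonAssocRing A] [NonUnitalNonAssocRing M]
  [NonUnitalNonAssocRing C] [Module R M] [Module R C]

theorem mulDefect_mem_range_inl (T : A → M × C) (hT : ∀ a b, (T (a * b)).2 = (T a).2 * (T b).2)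
    (a b : A) : mulDefect T a b ∈ LinearMap.range (LinearMap.inl R M C) := by
  simp [← LinearMap.ker_snd, mulDefect, hT]

theorem mulDefect_mem_map_range_inl [Module R A] {F : Type*} [FunLike F A (M × C)]
    [AddMonoidHomClass F A (M × C)] (T : F) (T' : M × C →ₗ[R] A) (hTT' : ∀ x, T (T' x) = x)
    (hT'T : ∀ a, T' (T a) = a)
    (hT : ∀ a b, (T (a * b)).2 = (T a).2 * (T b).2) (x y : M × C) :
    mulDefect T' x y ∈ (LinearMap.range (LinearMap.inl R M C)).map T' :=
  ⟨T (mulDefect T' x y), by simp [← LinearMap.ker_snd, mulDefect, hT, hTT'], hT'T _⟩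

end ProdSnd

theorem Matrix.single_one_mul_single_one_ne {n R : Type*} [Fintype n] [DecidableEq n] [Semiring R]
    [Nontrivial R] {i j : n} (hij : i ≠ j) :
    single i j (1 : R) * single j i 1 ≠ single j i 1 * single i j 1 := by
  rw [single_mul_single_same, single_mul_single_same]
  intro h
  exact hij.symm (by simpa [single_apply] using congrFun (congrFun h i) i)

theorem exists_mul_ne_mul_euclideanCLM {𝕜 n : Type*} [RCLike 𝕜] [Fintype n] [DecidableEq n]
    {i j : n} (hij : i ≠ j) :
    ∃ f g : EuclideanSpace 𝕜 n →L[𝕜] EuclideanSpace 𝕜 n, f * g ≠ g * f :=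
  ⟨Matrix.toEuclideanCLM (𝕜 := 𝕜) (n := n) (Matrix.single i j 1),
    Matrix.toEuclideanCLM (𝕜 := 𝕜) (n := n) (Matrix.single j i 1), by
    simpa only [← map_mul, ne_eq, EmbeddingLike.apply_eq_iff_eq] using
      Matrix.single_one_mul_single_one_ne hij⟩

theorem forall_mul_comm_of_surjective {F M N : Type*} [Mul M] [Mul N] [FunLike F M N]
    [MulHomClass F M N] (f : F) (hf : Function.Surjective f) (hM : ∀ a b : M, a * b = b * a)
    (x y : N) : x * y = y * x := by
  obtain ⟨a, rfl⟩ := hf x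
  obtain ⟨b, rfl⟩ := hf y
  rw [← map_mul, ← map_mul, hM]

def finMulLinearEquivMatrix (R : Type*) [Semiring R] (m n : ℕ) :
    (Fin (m * n) → R) ≃ₗ[R] Matrix (Fin m) (Fin n) R :=
  (LinearEquiv.funCongrLeft R R finProdFinEquiv).trans
    ((LinearEquiv.curry R R (Fin m) (Fin n)).trans (Matrix.ofLinearEquiv R))

noncomputable def linftyMatrixEquiv : lp (fun _ : ℕ => ℂ) ∞ ≃L[ℂ] StmtB :=
  (lp.inftySplitAt ℂ ℂ (2 * 2)).toContinuousLinearEquiv.trans <|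
    .prodCongr ((finMulLinearEquivMatrix ℂ 2 2).trans
      Matrix.toEuclideanCLM.toAlgEquiv.toLinearEquiv).toContinuousLinearEquiv (.refl ℂ _)

theorem linftyMatrixEquiv_apply_fst (a : lp (fun _ : ℕ => ℂ) ∞) :
    (linftyMatrixEquiv a).1 = Matrix.toEuclideanCLM (𝕜 := ℂ) !![a 0, a 1; a 2, a 3] := by
  change Matrix.toEuclideanCLM (𝕜 := ℂ) (n := Fin 2) _ = _
  congr 1
  ext i j
  fin_cases i <;> fin_cases j <;> rfl

/-- the map `T : ℓ∞(ℕ,ℂ) → M₂(ℂ) × ℓ∞(ℕ,ℂ)`,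
`T((aₙ)) = ([[a₀,a₁],[a₂,a₃]], (a₄,a₅,…))`, is a bounded linear bijection whose failure of
multiplicativity has range in a finite-dimensional subspace (hence is a compact bilinear map,
and `T` is a bounded cf-homomorphism with a bounded cf-homomorphism inverse), yet
`A = ℓ∞(ℕ,ℂ)` is commutative, `B` is not, and `A` and `B` are not isomorphic as algebras. -/
theorem linfty_matrix_cf_isomorphism_example :
    ∃ T : lp (fun _ : ℕ => ℂ) ∞ →L[ℂ] StmtB,
      (∀ a : lp (fun _ : ℕ => ℂ) ∞,
        (T a).1 = Matrix.toEuclideanCLM (𝕜 := ℂ) !![a 0, a 1; a 2, a 3] ∧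
        ∀ n : ℕ, (T a).2 n = a (n + 4)) ∧
      Function.Bijective T ∧
      (∃ V : Submodule ℂ StmtB, FiniteDimensional ℂ V ∧
        ∀ a b : lp (fun _ : ℕ => ℂ) ∞, T a * T b - T (a * b) ∈ V) ∧
      IsCompact (closure (Set.image2 (fun a b => T a * T b - T (a * b))
        (ball (0 : lp (fun _ : ℕ => ℂ) ∞) 1) (ball (0 : lp (fun _ : ℕ => ℂ) ∞) 1))) ∧
      (∃ T' : StmtB →L[ℂ] lp (fun _ : ℕ => ℂ) ∞,
        (∀ a, T' (T a) = a) ∧ (∀ x, T (T' x) = x) ∧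
        IsCompact (closure (Set.image2 (fun x y => T' x * T' y - T' (x * y))
          (ball (0 : StmtB) 1) (ball (0 : StmtB) 1)))) ∧
      (∀ a b : lp (fun _ : ℕ => ℂ) ∞, a * b = b * a) ∧
      ¬ (∀ x y : StmtB, x * y = y * x) ∧
      IsEmpty (lp (fun _ : ℕ => ℂ) ∞ ≃ₐ[ℂ] StmtB) := by
  -- Stating everything for bare `→L` maps, not the equivalence, keeps elaboration cheap.
  obtain ⟨T, T', hT'T, hTT', hT_fst, hT_snd, hT_mul⟩ : ∃ (T : lp (fun _ : ℕ => ℂ) ∞ →L[ℂ] StmtB)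
      (T' : StmtB →L[ℂ] lp (fun _ : ℕ => ℂ) ∞), (∀ a, T' (T a) = a) ∧ (∀ x, T (T' x) = x) ∧
      (∀ a, (T a).1 = Matrix.toEuclideanCLM (𝕜 := ℂ) !![a 0, a 1; a 2, a 3]) ∧
      (∀ a n, (T a).2 n = a (n + 4)) ∧ ∀ a b, (T (a * b)).2 = (T a).2 * (T b).2 :=
    ⟨linftyMatrixEquiv, linftyMatrixEquiv.symm, linftyMatrixEquiv.symm_apply_apply,
      linftyMatrixEquiv.apply_symm_apply, linftyMatrixEquiv_apply_fst, fun _ _ => rfl,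
      lp.inftySplitAt_snd_mul (𝕜 := ℂ) (2 * 2)⟩
  have hB : ¬ ∀ x y : StmtB, x * y = y * x := fun h => by
    obtain ⟨f, g, hfg⟩ := exists_mul_ne_mul_euclideanCLM (𝕜 := ℂ) (show (0 : Fin 2) ≠ 1 by decide)
    exact hfg (congrArg Prod.fst (h (f, 0) (g, 0)))
  have hV := mulDefect_mem_range_inl (R := ℂ) T hT_mul
  have hV' := mulDefect_mem_map_range_inl T (T' : StmtB →ₗ[ℂ] _) hTT' hT'T hT_mul
  exact ⟨T, fun a => ⟨hT_fst a, hT_snd a⟩, Function.bijective_iff_has_inverse.2 ⟨T', hT'T, hTT'⟩,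
    ⟨_, inferInstance, hV⟩, isCompact_closure_image2_mulDefect T _ hV,
    ⟨T', hT'T, hTT', isCompact_closure_image2_mulDefect T' _ hV'⟩,
    mul_comm, hB, ⟨fun e => hB (forall_mul_comm_of_surjective e e.surjective mul_comm)⟩⟩
end
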